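/- Let G be a graph embedded in ℝ^n and define Φ: Λ^k(ℝ^n)* → A^k(G) by (Φω)(u_0,...,u_k) = ω(u_1−u_0, ..., u_k−u_0) on (k+1)-cliques. Then for any α ∈ Λ^k(ℝ^n)* and β ∈ Λ^l(ℝ^n)*, Φα ∧ Φβ = (k! l!/(k+l)!) Φ(α ∧ β), where the left wedge is the graph wedge product (skew-symmetrization of the tensor product) and the right wedge is the usual exterior product of alternating multilinear forms. -/
import Mathlib


open scoped Classical
set_option maxHeartbeats 1000000

namespace GraphHodge


variable {X : Type*}

/-- A tuple of vertices forms a clique: any two distinct indices give adjacent vertices. -/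
def IsTupleClique (G : SimpleGraph X) {m : ℕ} (v : Fin m → X) : Prop :=
  ∀ i j : Fin m, i ≠ j → G.Adj (v i) (v j)

/-- Indicator function of cliques. -/
noncomputable def cliqueInd (G : SimpleGraph X) {m : ℕ} (v : Fin m → X) : ℝ :=
  if IsTupleClique G v then 1 else 0

/-- A `k`-form on a graph: skew-symmetric and supported on `(k+1)`-cliques. -/
def IsGraphForm (G : SimpleGraph X) (k : ℕ) (α : (Fin (k + 1) → X) → ℝ) : Prop :=
  (∀ v, ¬ IsTupleClique G v → α v = 0) ∧
  ∀ (σ : Equiv.Perm (Fin (k + 1))) (v : Fin (k + 1) → X),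
    α (v ∘ σ) = ((Equiv.Perm.sign σ : ℤ) : ℝ) * α v

/-- The exterior differential of a `k`-form on a graph. -/
noncomputable def gd (G : SimpleGraph X) {k : ℕ} (α : (Fin (k + 1) → X) → ℝ) :
    (Fin (k + 2) → X) → ℝ :=
  fun v => cliqueInd G v * ∑ j : Fin (k + 2), (-1 : ℝ) ^ (j : ℕ) * α (v ∘ j.succAbove)

/-- Tensor product of an `r`-form and an `s`-form on a graph. -/
noncomputable def gtensor (G : SimpleGraph X) {r s : ℕ}
    (α : (Fin (r + 1) → X) → ℝ) (β : (Fin (s + 1) → X) → ℝ) :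
    (Fin (r + s + 1) → X) → ℝ :=
  fun v => cliqueInd G v * α (fun i => v ⟨i.1, by have := i.2; omega⟩) *
    β (fun i => v ⟨r + i.1, by have := i.2; omega⟩)

/-- Skew-symmetrization operator on functions of vertex tuples. -/
noncomputable def skewSym {m : ℕ} (f : (Fin m → X) → ℝ) : (Fin m → X) → ℝ :=
  fun v => ((m.factorial : ℝ))⁻¹ *
    ∑ σ : Equiv.Perm (Fin m), ((Equiv.Perm.sign σ : ℤ) : ℝ) * f (v ∘ σ)

/-- Wedge product of graph forms: skew-symmetrization of the tensor product. -/
noncomputable def gwedge (G : SimpleGraph X) {r s : ℕ}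
    (α : (Fin (r + 1) → X) → ℝ) (β : (Fin (s + 1) → X) → ℝ) :
    (Fin (r + s + 1) → X) → ℝ :=
  skewSym (gtensor G α β)

/-- The map `Φ` from alternating multilinear forms on `ℝⁿ` to graph forms of a graph
embedded in `ℝⁿ` via `ι`. -/
noncomputable def Phi {X : Type*} (G : SimpleGraph X) {n : ℕ} (ι : X → (Fin n → ℝ))
    {k : ℕ} (ω : (Fin k → (Fin n → ℝ)) → ℝ) : (Fin (k + 1) → X) → ℝ :=
  fun v => cliqueInd G v * ω (fun i => ι (v i.succ) - ι (v 0))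

/-- The usual exterior (wedge) product of alternating multilinear forms, evaluated on
a tuple of vectors: `(α ∧ β)(v) = (k! l!)⁻¹ ∑_{σ} sgn σ · α(v_{σ·}) β(v_{σ·})`. -/
noncomputable def extWedgeVal {E : Type*} (k l : ℕ)
    (a : (Fin k → E) → ℝ) (b : (Fin l → E) → ℝ) : (Fin (k + l) → E) → ℝ :=
  fun v => (((k.factorial * l.factorial : ℕ) : ℝ))⁻¹ *
    ∑ σ : Equiv.Perm (Fin (k + l)), ((Equiv.Perm.sign σ : ℤ) : ℝ) *
      a (fun i => v (σ (Fin.castAdd l i))) * b (fun i => v (σ (Fin.natAdd k i)))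


section AuxAlt
variable {E : Type*} [AddCommGroup E] [Module ℝ E]

/-- adding the j-th slot value as base shift: L2 -/
lemma alt_shift {m : ℕ} (γ : AlternatingMap ℝ E ℝ (Fin m)) (x : Fin m → E) (j : Fin m) :
    γ (fun i => if i = j then -(x j) else x i - x j) = -γ x := by
  classical
  set c := x j with hc
  -- step 1: the tuple is an update
  have h1 : (fun i => if i = j then -c else x i - c)
      = Function.update (fun i => x i - c) j (-c) := by
    funext i
    by_cases h : i = j <;> simp [Function.update, h]
  -- key: γ (update (x·-c) j c) = γ x, via Finset induction
  have key : ∀ S : Finset (Fin m), j ∉ S →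
      γ (fun i => if i = j then c else if i ∈ S then x i else x i - c)
        = γ (Function.update (fun i => x i - c) j c) := by
    intro S
    induction S using Finset.induction_on with
    | empty =>
      intro _
      congr 1
      funext i
      by_cases h : i = j <;> simp [Function.update, h]
    | @insert a S ha ih =>
      intro hj
      have haj : a ≠ j := fun h => hj (by simp [h])
      have hjS : j ∉ S := fun h => hj (Finset.mem_insert_of_mem h)
      set u : Fin m → E := fun i => if i = j then c else if i ∈ S then x i else x i - c with hu
      have hins : (fun i => if i = j then c else if i ∈ Insert.insert a S then x i else x i - c)
          = Function.update u a (x a) := by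
        funext i
        by_cases h : i = j
        · simp [Function.update, h, (show ¬ (j = a) from fun hh => haj hh.symm), hu]
        · by_cases h2 : i = a
          · subst h2; simp [Function.update, h, hu]
          · by_cases h3 : i ∈ S <;> simp [Function.update, h, h2, h3, hu]
      rw [hins]
      have hua : u a = x a - c := by simp [hu, haj, ha]
      have huj : u j = c := by simp [hu]
      have hxa : x a = u a + u j := by rw [hua, huj]; abel
      rw [hxa]
      rw [γ.map_update_add]
      have hz : γ (Function.update u a (u j)) = 0 := by
        apply γ.map_eq_zero_of_eq _ (i := a) (j := j) _ haj
        simp [Function.update, haj, huj]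
      rw [hz, add_zero, Function.update_eq_self]
      exact ih hjS
  have h2 := key (Finset.univ.erase j) (by simp)
  have h3 : (fun i => if i = j then c else if i ∈ Finset.univ.erase j then x i else x i - c) = x := by
    funext i
    by_cases h : i = j <;> simp [h, hc]
  rw [h3] at h2
  rw [h1]
  have h4 : (-c) = (-1 : ℝ) • c := by simp
  rw [h4, γ.map_update_smul, h2, neg_one_smul]


lemma swap_succ {m : ℕ} (a b i : Fin m) :
    Equiv.swap a.succ b.succ i.succ = (Equiv.swap a b i).succ := by
  rcases eq_or_ne i a with h | ha
  · subst h; simp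
  · rcases eq_or_ne i b with h | hb
    · subst h; simp
    · rw [Equiv.swap_apply_of_ne_of_ne ha hb,
        Equiv.swap_apply_of_ne_of_ne (fun h => ha (Fin.succ_injective _ h))
          (fun h => hb (Fin.succ_injective _ h))]

lemma aff_swap_zero {m : ℕ} (γ : AlternatingMap ℝ E ℝ (Fin m)) (b : Fin m)
    (w : Fin (m+1) → E) :
    γ (fun i => w (Equiv.swap 0 b.succ i.succ) - w (Equiv.swap 0 b.succ 0)) =
      -γ (fun i => w i.succ - w 0) := by
  have h0 : Equiv.swap (0 : Fin (m+1)) b.succ 0 = b.succ := Equiv.swap_apply_left _ _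
  rw [h0]
  have := alt_shift γ (fun i => w i.succ - w 0) b
  rw [← this]
  congr 1
  funext i
  rcases eq_or_ne i b with h | hb
  · subst h
    simp [Equiv.swap_apply_right]
  · have h1 : Equiv.swap (0 : Fin (m+1)) b.succ i.succ = i.succ :=
      Equiv.swap_apply_of_ne_of_ne (Fin.succ_ne_zero i) (fun h => hb (Fin.succ_injective _ h))
    rw [h1]
    simp [hb]

lemma aff_swap {m : ℕ} (γ : AlternatingMap ℝ E ℝ (Fin m)) (x y : Fin (m+1)) (hxy : x ≠ y)
    (w : Fin (m+1) → E) :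
    γ (fun i => w (Equiv.swap x y i.succ) - w (Equiv.swap x y 0)) =
      -γ (fun i => w i.succ - w 0) := by
  rcases Fin.eq_zero_or_eq_succ x with hx | ⟨a, rfl⟩
  · subst hx
    rcases Fin.eq_zero_or_eq_succ y with hy | ⟨b, rfl⟩
    · exact absurd hy.symm hxy
    · exact aff_swap_zero γ b w
  · rcases Fin.eq_zero_or_eq_succ y with hy | ⟨b, rfl⟩
    · subst hy
      rw [Equiv.swap_comm]
      exact aff_swap_zero γ a w
    · have hab : a ≠ b := fun h => hxy (by rw [h])
      have h0 : Equiv.swap a.succ b.succ 0 = 0 :=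
        Equiv.swap_apply_of_ne_of_ne (Fin.succ_ne_zero a).symm (Fin.succ_ne_zero b).symm
      have htup : (fun i => w (Equiv.swap a.succ b.succ i.succ) - w (Equiv.swap a.succ b.succ 0))
          = (fun i => w i.succ - w 0) ∘ Equiv.swap a b := by
        funext i
        simp [h0, swap_succ]
      rw [htup, γ.map_swap _ hab]

lemma aff_alt {m : ℕ} (γ : AlternatingMap ℝ E ℝ (Fin m)) (σ : Equiv.Perm (Fin (m+1)))
    (w : Fin (m+1) → E) :
    γ (fun i => w (σ i.succ) - w (σ 0)) =
      ((Equiv.Perm.sign σ : ℤ) : ℝ) * γ (fun i => w i.succ - w 0) := by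
  have H : ∀ σ : Equiv.Perm (Fin (m+1)), ∀ w : Fin (m+1) → E,
      γ (fun i : Fin m => w (σ i.succ) - w (σ 0)) =
        ((Equiv.Perm.sign σ : ℤ) : ℝ) * γ (fun i : Fin m => w i.succ - w 0) := by
    intro σ
    refine Equiv.Perm.swap_induction_on σ ?_ ?_
    · intro w; simp
    · intro τ a b hab ih w
      have h1 : (fun i : Fin m => w ((Equiv.swap a b * τ) i.succ) - w ((Equiv.swap a b * τ) 0))
          = (fun i : Fin m => (w ∘ Equiv.swap a b) (τ i.succ) - (w ∘ Equiv.swap a b) (τ 0)) := by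
        funext i; rfl
      rw [h1, ih (w ∘ Equiv.swap a b)]
      have h2 : (fun i : Fin m => (w ∘ Equiv.swap a b) i.succ - (w ∘ Equiv.swap a b) 0)
          = (fun i : Fin m => w (Equiv.swap a b i.succ) - w (Equiv.swap a b 0)) := rfl
      rw [h2, aff_swap γ a b hab w]
      rw [Equiv.Perm.sign_mul, Equiv.Perm.sign_swap hab]
      push_cast
      ring
  exact H σ w

variable {k l : ℕ} (α : AlternatingMap ℝ E ℝ (Fin k)) (β : AlternatingMap ℝ E ℝ (Fin l))

/-- the product multilinear map -/
noncomputable def Pm : MultilinearMap ℝ (fun _ : Fin (k+l) => E) ℝ :=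
  ((LinearMap.mul' ℝ ℝ).compMultilinearMap
    (α.toMultilinearMap.domCoprod β.toMultilinearMap)).domDomCongr finSumFinEquiv

lemma Pm_apply (x : Fin (k+l) → E) :
    Pm α β x = α (fun i => x (Fin.castAdd l i)) * β (fun j => x (Fin.natAdd k j)) := by
  simp [Pm, MultilinearMap.domDomCongr_apply, LinearMap.compMultilinearMap_apply,
    MultilinearMap.domCoprod_apply, LinearMap.mul'_apply]

/-- the alternatization -/
noncomputable def Gam : AlternatingMap ℝ E ℝ (Fin (k+l)) :=
  MultilinearMap.alternatization (Pm α β)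

lemma Gam_apply (x : Fin (k+l) → E) :
    Gam α β x = ∑ τ : Equiv.Perm (Fin (k+l)), ((Equiv.Perm.sign τ : ℤ) : ℝ) *
      (α (fun i => x (τ (Fin.castAdd l i))) * β (fun j => x (τ (Fin.natAdd k j)))) := by
  rw [Gam, MultilinearMap.alternatization_apply]
  refine Finset.sum_congr rfl fun τ _ => ?_
  rw [MultilinearMap.domDomCongr_apply, Pm_apply]
  simp [Units.smul_def, zsmul_eq_mul]


lemma Gam_apply' (x : Fin (k+l) → E) :
    Gam α β x = ∑ τ : Equiv.Perm (Fin (k+l)), ((Equiv.Perm.sign τ : ℤ) : ℝ) *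
      Pm α β (x ∘ τ) := by
  rw [Gam, MultilinearMap.alternatization_apply]
  refine Finset.sum_congr rfl fun τ _ => ?_
  rw [MultilinearMap.domDomCongr_apply]
  simp [Units.smul_def, zsmul_eq_mul]
  rfl

lemma sign_sq (σ : Equiv.Perm (Fin (k+l+1))) :
    ((Equiv.Perm.sign σ : ℤ) : ℝ) * ((Equiv.Perm.sign σ : ℤ) : ℝ) = 1 := by
  rcases Int.units_eq_one_or (Equiv.Perm.sign σ) with h | h <;> rw [h] <;> norm_num

lemma sum_Ptilde (w : Fin (k+l+1) → E) :
    ∑ σ : Equiv.Perm (Fin (k+l+1)), ((Equiv.Perm.sign σ : ℤ) : ℝ) *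
      Pm α β (fun i : Fin (k+l) => w (σ i.succ) - w (σ 0))
    = ((k+l+1 : ℕ) : ℝ) * Gam α β (fun i : Fin (k+l) => w i.succ - w 0) := by
  classical
  set g : Equiv.Perm (Fin (k+l+1)) → ℝ := fun ρ =>
    ((Equiv.Perm.sign ρ : ℤ) : ℝ) * Pm α β (fun i : Fin (k+l) => w (ρ i.succ) - w (ρ 0)) with hg
  -- compute D two ways
  have ha : ∑ σ : Equiv.Perm (Fin (k+l+1)), ((Equiv.Perm.sign σ : ℤ) : ℝ) *
      Gam α β (fun i : Fin (k+l) => w (σ i.succ) - w (σ 0))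
      = (((k+l+1).factorial : ℕ) : ℝ) * Gam α β (fun i : Fin (k+l) => w i.succ - w 0) := by
    have : ∀ σ : Equiv.Perm (Fin (k+l+1)), ((Equiv.Perm.sign σ : ℤ) : ℝ) *
        Gam α β (fun i : Fin (k+l) => w (σ i.succ) - w (σ 0))
        = Gam α β (fun i : Fin (k+l) => w i.succ - w 0) := by
      intro σ
      rw [aff_alt (Gam α β) σ w, ← mul_assoc, sign_sq, one_mul]
    rw [Finset.sum_congr rfl fun σ _ => this σ, Finset.sum_const, Finset.card_univ,
      Fintype.card_perm, Fintype.card_fin, nsmul_eq_mul]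
  have hb : ∑ σ : Equiv.Perm (Fin (k+l+1)), ((Equiv.Perm.sign σ : ℤ) : ℝ) *
      Gam α β (fun i : Fin (k+l) => w (σ i.succ) - w (σ 0))
      = (((k+l).factorial : ℕ) : ℝ) * ∑ ρ : Equiv.Perm (Fin (k+l+1)), g ρ := by
    have hterm : ∀ σ : Equiv.Perm (Fin (k+l+1)), ∀ τ : Equiv.Perm (Fin (k+l)),
        ((Equiv.Perm.sign σ : ℤ) : ℝ) * (((Equiv.Perm.sign τ : ℤ) : ℝ) *
          Pm α β ((fun i : Fin (k+l) => w (σ i.succ) - w (σ 0)) ∘ τ))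
        = g (σ * Equiv.Perm.decomposeFin.symm (0, τ)) := by
      intro σ τ
      set τh := Equiv.Perm.decomposeFin.symm ((0 : Fin (k+l+1)), τ) with hτh
      have h0 : τh 0 = 0 := Equiv.Perm.decomposeFin_symm_apply_zero 0 τ
      have hsucc : ∀ i : Fin (k+l), τh i.succ = (τ i).succ := by
        intro i
        rw [hτh, Equiv.Perm.decomposeFin_symm_apply_succ]
        simp
      have hsgn : Equiv.Perm.sign τh = Equiv.Perm.sign τ := by
        rw [hτh, Equiv.Perm.decomposeFin.symm_sign]
        simp
      have harg : ((fun i : Fin (k+l) => w (σ i.succ) - w (σ 0)) ∘ τ)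
          = fun i : Fin (k+l) => w ((σ * τh) i.succ) - w ((σ * τh) 0) := by
        funext i
        simp [Equiv.Perm.mul_apply, hsucc, h0]
      rw [harg]
      have hgval : g (σ * τh) = ((Equiv.Perm.sign (σ * τh) : ℤ) : ℝ) *
          Pm α β (fun i : Fin (k+l) => w ((σ * τh) i.succ) - w ((σ * τh) 0)) := rfl
      rw [show g (σ * Equiv.Perm.decomposeFin.symm ((0 : Fin (k+l+1)), τ)) = g (σ * τh) from rfl,
        hgval, Equiv.Perm.sign_mul, hsgn]
      push_cast
      ring
    calc ∑ σ : Equiv.Perm (Fin (k+l+1)), ((Equiv.Perm.sign σ : ℤ) : ℝ) *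
          Gam α β (fun i : Fin (k+l) => w (σ i.succ) - w (σ 0))
        = ∑ σ : Equiv.Perm (Fin (k+l+1)), ∑ τ : Equiv.Perm (Fin (k+l)),
            g (σ * Equiv.Perm.decomposeFin.symm (0, τ)) := by
          refine Finset.sum_congr rfl fun σ _ => ?_
          rw [Gam_apply', Finset.mul_sum]
          exact Finset.sum_congr rfl fun τ _ => hterm σ τ
      _ = ∑ τ : Equiv.Perm (Fin (k+l)), ∑ σ : Equiv.Perm (Fin (k+l+1)),
            g (σ * Equiv.Perm.decomposeFin.symm (0, τ)) := Finset.sum_comm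
      _ = ∑ τ : Equiv.Perm (Fin (k+l)), ∑ ρ : Equiv.Perm (Fin (k+l+1)), g ρ := by
          refine Finset.sum_congr rfl fun τ _ => ?_
          exact Equiv.sum_comp (Equiv.mulRight (Equiv.Perm.decomposeFin.symm (0, τ))) g
      _ = (((k+l).factorial : ℕ) : ℝ) * ∑ ρ : Equiv.Perm (Fin (k+l+1)), g ρ := by
          rw [Finset.sum_const, Finset.card_univ, Fintype.card_perm, Fintype.card_fin,
            nsmul_eq_mul]
  have hfac : (((k+l+1).factorial : ℕ) : ℝ)
      = (((k+l).factorial : ℕ) : ℝ) * ((k+l+1 : ℕ) : ℝ) := by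
    rw [Nat.factorial_succ]
    push_cast
    ring
  have hne : (((k+l).factorial : ℕ) : ℝ) ≠ 0 := by
    exact_mod_cast Nat.factorial_ne_zero (k+l)
  have := ha.symm.trans hb
  rw [hfac] at this
  rw [mul_assoc] at this
  have := (mul_left_cancel₀ hne this).symm
  rw [hg] at this
  exact this

/-- the sum-splitting equivalence -/
def E2 (k l : ℕ) : (Fin (k+1) ⊕ Fin l) ≃ Fin (k+l+1) :=
  finSumFinEquiv.trans (finCongr (by omega))

/-- base-swapping permutation on the left block -/
def rho (k : ℕ) : Equiv.Perm (Fin (k+1)) := Equiv.swap 0 (Fin.last k)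

/-- the cycle used to move the β base point -/
def cyc (k l : ℕ) : Equiv.Perm (Fin (k+l+1)) :=
  (E2 k l).permCongr (Equiv.sumCongr (rho k) (Equiv.refl (Fin l)))

lemma cyc_inl (p : Fin (k+1)) : cyc k l (E2 k l (Sum.inl p)) = E2 k l (Sum.inl (rho k p)) := by
  simp [cyc, Equiv.permCongr_apply]

lemma cyc_inr (j : Fin l) : cyc k l (E2 k l (Sum.inr j)) = E2 k l (Sum.inr j) := by
  simp [cyc, Equiv.permCongr_apply]

lemma E2_inl (p : Fin (k+1)) : (E2 k l (Sum.inl p) : ℕ) = p.1 := by simp [E2]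

lemma E2_inr (j : Fin l) : (E2 k l (Sum.inr j) : ℕ) = k+1+j.1 := by simp [E2]

lemma sign_cyc : Equiv.Perm.sign (cyc k l) = Equiv.Perm.sign (rho k) := by
  rw [cyc, Equiv.Perm.sign_permCongr]
  rw [show Equiv.sumCongr (rho k) (Equiv.refl (Fin l)) =
    Equiv.Perm.sumCongr (rho k) (Equiv.refl (Fin l)) from rfl]
  rw [Equiv.Perm.sign_sumCongr]
  simp

lemma idx0 : (⟨0, by omega⟩ : Fin (k+l+1)) = E2 k l (Sum.inl 0) := by
  rw [Fin.ext_iff, E2_inl]; simp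

lemma idxk : (⟨k, by omega⟩ : Fin (k+l+1)) = E2 k l (Sum.inl (Fin.last k)) := by
  rw [Fin.ext_iff, E2_inl]; rfl

lemma idxc (i : Fin k) : ((Fin.castAdd l i).succ : Fin (k+l+1)) = E2 k l (Sum.inl i.succ) := by
  rw [Fin.ext_iff, E2_inl]; simp

lemma idxn (j : Fin l) : ((Fin.natAdd k j).succ : Fin (k+l+1)) = E2 k l (Sum.inr j) := by
  rw [Fin.ext_iff, E2_inr]; simp; omega

lemma idxn2 (j : Fin l) :
    E2 k l (Sum.inr j) = (⟨k+j.1+1, by have := j.isLt; omega⟩ : Fin (k+l+1)) := by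
  rw [Fin.ext_iff, E2_inr]; simp; omega

lemma idx1 (i : Fin k) :
    E2 k l (Sum.inl i.succ) = (⟨i.1+1, by have := i.isLt; omega⟩ : Fin (k+l+1)) := by
  rw [Fin.ext_iff, E2_inl]; rfl

lemma cyc_zero : cyc k l 0 = E2 k l (Sum.inl (Fin.last k)) := by
  rw [show (0 : Fin (k+l+1)) = E2 k l (Sum.inl 0) from idx0, cyc_inl,
    show rho k 0 = Fin.last k by simp [rho]]

lemma rho_zero : rho k 0 = Fin.last k := by simp [rho]

lemma main_sum (q : Fin (k+l+1) → E) :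
    ∑ σ : Equiv.Perm (Fin (k+l+1)), ((Equiv.Perm.sign σ : ℤ) : ℝ) *
      (α (fun i : Fin k => q (σ ⟨i.1+1, by have := i.isLt; omega⟩) - q (σ ⟨0, by omega⟩)) *
       β (fun j : Fin l => q (σ ⟨k+j.1+1, by have := j.isLt; omega⟩) - q (σ ⟨k, by omega⟩)))
    = ((k+l+1 : ℕ) : ℝ) * Gam α β (fun i : Fin (k+l) => q i.succ - q 0) := by
  classical
  set g : Equiv.Perm (Fin (k+l+1)) → ℝ := fun σ =>
    ((Equiv.Perm.sign σ : ℤ) : ℝ) *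
      Pm α β (fun i : Fin (k+l) => q (σ i.succ) - q (σ 0)) with hg
  have key : ∀ σ : Equiv.Perm (Fin (k+l+1)),
      g (σ * cyc k l) = ((Equiv.Perm.sign σ : ℤ) : ℝ) *
        (α (fun i : Fin k => q (σ ⟨i.1+1, by have := i.isLt; omega⟩) - q (σ ⟨0, by omega⟩)) *
         β (fun j : Fin l => q (σ ⟨k+j.1+1, by have := j.isLt; omega⟩) - q (σ ⟨k, by omega⟩))) := by
    intro σ
    have h1 : g (σ * cyc k l) = ((Equiv.Perm.sign (σ * cyc k l) : ℤ) : ℝ) *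
        Pm α β (fun i : Fin (k+l) => q ((σ * cyc k l) i.succ) - q ((σ * cyc k l) 0)) := rfl
    rw [h1, Pm_apply]
    have hzero : (σ * cyc k l) 0 = σ (E2 k l (Sum.inl (Fin.last k))) := by
      rw [Equiv.Perm.mul_apply, cyc_zero]
    have hcast : ∀ i : Fin k,
        (σ * cyc k l) (Fin.castAdd l i).succ = σ (E2 k l (Sum.inl (rho k i.succ))) := by
      intro i
      rw [Equiv.Perm.mul_apply, idxc i, cyc_inl]
    have hnat : ∀ j : Fin l, (σ * cyc k l) (Fin.natAdd k j).succ =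
        σ (⟨k+j.1+1, by have := j.isLt; omega⟩ : Fin (k+l+1)) := by
      intro j
      rw [Equiv.Perm.mul_apply, idxn j, cyc_inr, idxn2 j]
    have hβeq : (fun j : Fin l => q ((σ * cyc k l) (Fin.natAdd k j).succ) - q ((σ * cyc k l) 0))
        = (fun j : Fin l => q (σ ⟨k+j.1+1, by have := j.isLt; omega⟩) - q (σ ⟨k, by omega⟩)) := by
      funext j
      rw [hnat j, hzero, ← idxk]
    have hαeq : (fun i : Fin k => q ((σ * cyc k l) (Fin.castAdd l i).succ) - q ((σ * cyc k l) 0))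
        = (fun i : Fin k => q (σ (E2 k l (Sum.inl (rho k i.succ))))
            - q (σ (E2 k l (Sum.inl (rho k 0))))) := by
      funext i
      rw [hcast i, hzero, rho_zero]
    rw [hβeq, hαeq]
    rw [aff_alt α (rho k) (fun p : Fin (k+1) => q (σ (E2 k l (Sum.inl p))))]
    have hα2 : (fun i : Fin k => q (σ (E2 k l (Sum.inl i.succ))) - q (σ (E2 k l (Sum.inl 0))))
        = (fun i : Fin k => q (σ ⟨i.1+1, by have := i.isLt; omega⟩) - q (σ ⟨0, by omega⟩)) := by
      funext i
      rw [idx1 i, ← idx0]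
    rw [hα2, Equiv.Perm.sign_mul, sign_cyc]
    rcases Int.units_eq_one_or (Equiv.Perm.sign (rho k)) with h2 | h2 <;>
      rcases Int.units_eq_one_or (Equiv.Perm.sign σ) with h3 | h3 <;>
      rw [h2, h3] <;> norm_num <;> ring
  calc ∑ σ : Equiv.Perm (Fin (k+l+1)), ((Equiv.Perm.sign σ : ℤ) : ℝ) *
        (α (fun i : Fin k => q (σ ⟨i.1+1, by have := i.isLt; omega⟩) - q (σ ⟨0, by omega⟩)) *
         β (fun j : Fin l => q (σ ⟨k+j.1+1, by have := j.isLt; omega⟩) - q (σ ⟨k, by omega⟩)))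
      = ∑ σ : Equiv.Perm (Fin (k+l+1)), g (σ * cyc k l) :=
        (Finset.sum_congr rfl fun σ _ => (key σ).symm)
    _ = ∑ σ : Equiv.Perm (Fin (k+l+1)), g σ := Equiv.sum_comp (Equiv.mulRight (cyc k l)) g
    _ = ((k+l+1 : ℕ) : ℝ) * Gam α β (fun i : Fin (k+l) => q i.succ - q 0) := sum_Ptilde α β q

end AuxAlt

lemma clique_comp {G : SimpleGraph X} {a b : ℕ} {v : Fin b → X}
    (hv : IsTupleClique G v) {f : Fin a → Fin b} (hf : Function.Injective f) :
    IsTupleClique G (v ∘ f) :=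
  fun i j hij => hv (f i) (f j) fun h => hij (hf h)

lemma clique_perm {G : SimpleGraph X} {m : ℕ} {v : Fin m → X}
    (σ : Equiv.Perm (Fin m)) (h : IsTupleClique G (v ∘ σ)) : IsTupleClique G v := by
  intro i j hij
  have := h (σ.symm i) (σ.symm j) (fun hh => hij (by simpa using congrArg σ hh))
  simpa using this

/-- for a graph embedded in `ℝⁿ`,
`Φα ∧ Φβ = (k! l!/(k+l)!) Φ(α ∧ β)` for alternating forms `α ∈ Λ^k(ℝⁿ)*`,
`β ∈ Λ^l(ℝⁿ)*`, where the left wedge is the graph wedge product. -/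
theorem phi_wedge {X : Type*} (G : SimpleGraph X) (n : ℕ) (ι : X → (Fin n → ℝ))
    (hι : Function.Injective ι) (k l : ℕ)
    (α : AlternatingMap ℝ (Fin n → ℝ) ℝ (Fin k))
    (β : AlternatingMap ℝ (Fin n → ℝ) ℝ (Fin l))
    (v : Fin (k + l + 1) → X) :
    gwedge G (Phi G ι ⇑α) (Phi G ι ⇑β) v =
      ((k.factorial : ℝ) * (l.factorial : ℝ) / ((k + l).factorial : ℝ)) *
        Phi G ι (extWedgeVal k l ⇑α ⇑β) v := by
  classical
  by_cases hv : IsTupleClique G v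
  · -- clique case
    set q : Fin (k+l+1) → (Fin n → ℝ) := fun i => ι (v i) with hq
    have hterm : ∀ σ : Equiv.Perm (Fin (k+l+1)),
        gtensor G (Phi G ι ⇑α) (Phi G ι ⇑β) (v ∘ σ)
        = α (fun i : Fin k => q (σ ⟨i.1+1, by have := i.isLt; omega⟩) - q (σ ⟨0, by omega⟩)) *
          β (fun j : Fin l => q (σ ⟨k+j.1+1, by have := j.isLt; omega⟩) - q (σ ⟨k, by omega⟩)) := by
      intro σ
      rw [gtensor]
      have hc1 : cliqueInd G (v ∘ σ) = 1 :=
        if_pos (clique_comp hv σ.injective)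
      rw [hc1, one_mul]
      rw [Phi, Phi]
      have hc2 : cliqueInd G (fun i : Fin (k+1) =>
          (v ∘ σ) ⟨i.1, by have := i.2; omega⟩) = 1 := by
        refine if_pos ?_
        have : (fun i : Fin (k+1) => (v ∘ σ) ⟨i.1, by have := i.2; omega⟩)
            = v ∘ (fun i : Fin (k+1) => σ ⟨i.1, by have := i.2; omega⟩) := rfl
        rw [this]
        refine clique_comp hv ?_
        intro i j hij
        have h5 := σ.injective hij
        rw [Fin.ext_iff] at h5 ⊢
        simp only [Fin.val_mk] at h5
        omega
      have hc3 : cliqueInd G (fun i : Fin (l+1) =>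
          (v ∘ σ) ⟨k + i.1, by have := i.2; omega⟩) = 1 := by
        refine if_pos ?_
        have : (fun i : Fin (l+1) => (v ∘ σ) ⟨k + i.1, by have := i.2; omega⟩)
            = v ∘ (fun i : Fin (l+1) => σ ⟨k + i.1, by have := i.2; omega⟩) := rfl
        rw [this]
        refine clique_comp hv ?_
        intro i j hij
        have h5 := σ.injective hij
        rw [Fin.ext_iff] at h5 ⊢
        simp only [Fin.val_mk] at h5
        omega
      rw [hc2, hc3, one_mul, one_mul]
      refine congrArg₂ (· * ·) (congrArg (⇑α) ?_) (congrArg (⇑β) ?_)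
      · funext i
        refine congrArg₂ (· - ·)
          (congrArg (fun t : Fin (k+l+1) => ι (v (σ t))) (Fin.ext ?_))
          (congrArg (fun t : Fin (k+l+1) => ι (v (σ t))) (Fin.ext ?_)) <;> simp
      · funext j2
        refine congrArg₂ (· - ·)
          (congrArg (fun t : Fin (k+l+1) => ι (v (σ t))) (Fin.ext ?_))
          (congrArg (fun t : Fin (k+l+1) => ι (v (σ t))) (Fin.ext ?_)) <;> (simp; try omega)
    -- left side
    rw [gwedge, skewSym]
    rw [Finset.sum_congr rfl fun σ _ => by rw [hterm σ]]
    rw [main_sum α β q]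
    -- right side
    rw [Phi]
    have hcv : cliqueInd G v = 1 := if_pos hv
    rw [hcv, one_mul, extWedgeVal]
    have hGam : Gam α β (fun i : Fin (k+l) => q i.succ - q 0)
        = ∑ τ : Equiv.Perm (Fin (k+l)), ((Equiv.Perm.sign τ : ℤ) : ℝ) *
            α (fun i => (fun i' : Fin (k+l) => ι (v i'.succ) - ι (v 0)) (τ (Fin.castAdd l i))) *
            β (fun j => (fun i' : Fin (k+l) => ι (v i'.succ) - ι (v 0)) (τ (Fin.natAdd k j))) := by
      rw [Gam_apply]
      refine Finset.sum_congr rfl fun τ _ => ?_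
      rw [hq]
      ring
    rw [← hGam]
    have h1 : ((k+l+1).factorial : ℝ) ≠ 0 := by exact_mod_cast Nat.factorial_ne_zero _
    have h2 : ((k+l).factorial : ℝ) ≠ 0 := by exact_mod_cast Nat.factorial_ne_zero _
    have h3 : ((k.factorial * l.factorial : ℕ) : ℝ) ≠ 0 := by
      exact_mod_cast Nat.mul_ne_zero (Nat.factorial_ne_zero _) (Nat.factorial_ne_zero _)
    have h4 : ((k+l+1).factorial : ℝ) = ((k+l+1 : ℕ) : ℝ) * ((k+l).factorial : ℝ) := by
      rw [Nat.factorial_succ]; push_cast; ring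
    field_simp
    rw [h4]
    push_cast
    ring
  · -- non-clique case
    have hL : gwedge G (Phi G ι ⇑α) (Phi G ι ⇑β) v = 0 := by
      rw [gwedge, skewSym]
      have : ∀ σ : Equiv.Perm (Fin (k+l+1)),
          ((Equiv.Perm.sign σ : ℤ) : ℝ) * gtensor G (Phi G ι ⇑α) (Phi G ι ⇑β) (v ∘ σ) = 0 := by
        intro σ
        have : cliqueInd G (v ∘ σ) = 0 := by
          rw [cliqueInd, if_neg]
          intro h
          exact hv (clique_perm σ h)
        rw [gtensor, this]
        ring
      rw [Finset.sum_congr rfl fun σ _ => this σ]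
      simp
    rw [hL, Phi]
    have : cliqueInd G v = 0 := by rw [cliqueInd, if_neg hv]
    rw [this]
    ring


end GraphHodge
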